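/- arXiv:1311.2106 — 10 statements merged into one kernel-verified Lean document; each statement's English description precedes it below -/
import Mathlib

section
/- Let V be a finite ground set with |V| = n, let f : 2^V → ℝ be a normalized submodular set function, let π be a bijection from {1,…,n} to V, and set S_0 = ∅ and S_i = {π(1),…,π(i)} for 1 ≤ i ≤ n. Define h : V → ℝ by h(π(i)) = f(S_i) − f(S_{i−1}). Then for every X ⊆ V one has Σ_{j∈X} h(j) ≤ f(X), and for every 0 ≤ i ≤ n one has Σ_{j∈S_i} h(j) = f(S_i). (That is, h is a modular lower bound of f that is tight on every prefix set of the chain defined by π.) -/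
/-- The greedy subgradient `h` defined from a permutation `π` of the
ground set is a modular lower bound of the normalized submodular function `f`,
tight on every prefix set of the chain defined by `π`. -/
theorem modular_lower_bound_of_chain
    {V : Type*} [Fintype V] [DecidableEq V] (n : ℕ) (hn : Fintype.card V = n)
    (f : Finset V → ℝ)
    (hsub : ∀ S T : Finset V, f (S ∪ T) + f (S ∩ T) ≤ f S + f T)
    (hnorm : f ∅ = 0)
    (π : Fin n ≃ V)
    (S : ℕ → Finset V)
    (hS : ∀ i : ℕ, S i = (Finset.univ.filter (fun k : Fin n => (k : ℕ) < i)).image π)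
    (h : V → ℝ)
    (hh : ∀ k : Fin n, h (π k) = f (S ((k : ℕ) + 1)) - f (S (k : ℕ))) :
    (∀ X : Finset V, ∑ j ∈ X, h j ≤ f X) ∧
      (∀ i : ℕ, i ≤ n → ∑ j ∈ S i, h j = f (S i)) := by
  have hS0 : S 0 = ∅ := by rw [hS]; simp
  have hstep : ∀ i (hi : i < n), S (i + 1) = insert (π ⟨i, hi⟩) (S i) := by
    intro i hi
    rw [hS, hS]
    ext x
    simp only [Finset.mem_image, Finset.mem_filter, Finset.mem_univ, true_and,
      Finset.mem_insert]
    constructor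
    · rintro ⟨k, hk, rfl⟩
      rcases Nat.lt_succ_iff_lt_or_eq.mp hk with h' | h'
      · exact Or.inr ⟨k, h', rfl⟩
      · left; congr 1; exact Fin.ext h'
    · rintro (h' | ⟨k, hk, rfl⟩)
      · exact ⟨⟨i, hi⟩, Nat.lt_succ_self i, h'.symm⟩
      · exact ⟨k, Nat.lt_succ_of_lt hk, rfl⟩
  have hnotmem : ∀ i (hi : i < n), π ⟨i, hi⟩ ∉ S i := by
    intro i hi hmem
    rw [hS] at hmem
    obtain ⟨k, hk, heq⟩ := Finset.mem_image.mp hmem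
    simp only [Finset.mem_filter, Finset.mem_univ, true_and] at hk
    have : k = ⟨i, hi⟩ := π.injective heq
    rw [this] at hk
    exact absurd hk (lt_irrefl i)
  have hSn : S n = Finset.univ := by
    rw [hS]
    have : (Finset.univ.filter (fun k : Fin n => (k : ℕ) < n)) = Finset.univ := by
      ext k; simp [k.isLt]
    rw [this]
    exact Finset.image_univ_equiv π
  -- part 2 first
  have part2 : ∀ i : ℕ, i ≤ n → ∑ j ∈ S i, h j = f (S i) := by
    intro i hi
    induction i with
    | zero => simp [hS0, hnorm]
    | succ i ih =>
      have hi' : i < n := hi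
      have e := hstep i hi'
      calc ∑ j ∈ S (i + 1), h j
          = h (π ⟨i, hi'⟩) + ∑ j ∈ S i, h j := by
            rw [e, Finset.sum_insert (hnotmem i hi')]
        _ = f (S (i + 1)) := by
            rw [hh ⟨i, hi'⟩, ih hi'.le]
            simp only [Fin.val_mk]
            ring
  refine ⟨?_, part2⟩
  have key : ∀ X : Finset V, ∀ i : ℕ, i ≤ n → ∑ j ∈ X ∩ S i, h j ≤ f (X ∩ S i) := by
    intro X i hi
    induction i with
    | zero => simp [hS0, hnorm]
    | succ i ih =>
      have hi' : i < n := hi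
      have e := hstep i hi'
      have hSsub : S i ⊆ S (i + 1) := by rw [e]; exact Finset.subset_insert _ _
      by_cases hx : π ⟨i, hi'⟩ ∈ X
      · have e2 : X ∩ S (i + 1) = insert (π ⟨i, hi'⟩) (X ∩ S i) := by
          rw [e]; ext x
          simp only [Finset.mem_inter, Finset.mem_insert]
          constructor
          · rintro ⟨hxX, hx' | hx'⟩
            · exact Or.inl hx'
            · exact Or.inr ⟨hxX, hx'⟩
          · rintro (rfl | ⟨h1, h2⟩)
            · exact ⟨hx, Or.inl rfl⟩
            · exact ⟨h1, Or.inr h2⟩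
        have hnm2 : π ⟨i, hi'⟩ ∉ X ∩ S i := fun hc =>
          hnotmem i hi' (Finset.mem_inter.mp hc).2
        have hsub' := hsub (S i) (X ∩ S (i + 1))
        have hu : S i ∪ (X ∩ S (i + 1)) = S (i + 1) := by
          apply Finset.Subset.antisymm
          · exact Finset.union_subset hSsub Finset.inter_subset_right
          · rw [e]
            intro x hxm
            rcases Finset.mem_insert.mp hxm with rfl | hxm
            · exact Finset.mem_union_right _
                (Finset.mem_inter.mpr ⟨hx, Finset.mem_insert_self _ _⟩)
            · exact Finset.mem_union_left _ hxm
        have hint : S i ∩ (X ∩ S (i + 1)) = X ∩ S i := by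
          ext x
          simp only [Finset.mem_inter]
          constructor
          · rintro ⟨h1, h2, _⟩; exact ⟨h2, h1⟩
          · rintro ⟨h1, h2⟩; exact ⟨h2, h1, hSsub h2⟩
        rw [hu, hint] at hsub'
        have hbound : h (π ⟨i, hi'⟩) ≤ f (X ∩ S (i + 1)) - f (X ∩ S i) := by
          rw [hh ⟨i, hi'⟩]
          simp only [Fin.val_mk]
          linarith
        calc ∑ j ∈ X ∩ S (i + 1), h j
            = h (π ⟨i, hi'⟩) + ∑ j ∈ X ∩ S i, h j := by
              rw [e2, Finset.sum_insert hnm2]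
          _ ≤ (f (X ∩ S (i + 1)) - f (X ∩ S i)) + f (X ∩ S i) := by
              exact add_le_add hbound (ih hi'.le)
          _ = f (X ∩ S (i + 1)) := by ring
      · have e2 : X ∩ S (i + 1) = X ∩ S i := by
          rw [e]; ext x
          simp only [Finset.mem_inter, Finset.mem_insert]
          constructor
          · rintro ⟨hxX, hx' | hx'⟩
            · exact absurd (hx' ▸ hxX) hx
            · exact ⟨hxX, hx'⟩
          · rintro ⟨h1, h2⟩; exact ⟨h1, Or.inr h2⟩
        rw [e2]
        exact ih hi'.le
  intro X
  have := key X n le_rfl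
  rwa [hSn, Finset.inter_univ] at this
end

section
/- Let V be a finite ground set, f : 2^V → ℝ a normalized submodular set function, and X ⊆ V. Define m^f_{X,1}(Y) = f(X) − Σ_{j ∈ X∖Y} f(j | X∖{j}) + Σ_{j ∈ Y∖X} f({j}). Then m^f_{X,1}(Y) ≥ f(Y) for every Y ⊆ V, and m^f_{X,1}(X) = f(X). (That is, m^f_{X,1} is a modular upper bound of f that is tight at X.) -/
/-!
Peeling off the elements of `X \ Y` one at a time, submodularity says each removal loses at
least the gain `f(j | X \ {j})` that `j` has on top of all of `X`; adding the elements of `Y \ X`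
one at a time, submodularity together with `f ∅ = 0` says each addition gains at most `f {j}`.
Going from `X` down to `X ∩ Y` and then up to `Y` gives `f Y ≤ m Y`.
-/

open Finset

namespace Submodular

variable {V : Type*} [DecidableEq V] {f : Finset V → ℝ}

theorem le_add_of_disjoint (hsub : ∀ S T : Finset V, f (S ∪ T) + f (S ∩ T) ≤ f S + f T)
    (hnorm : f ∅ = 0) {S T : Finset V} (hST : Disjoint S T) : f (S ∪ T) ≤ f S + f T := by
  have h := hsub S T
  rwa [disjoint_iff_inter_eq_empty.1 hST, hnorm, add_zero] at h

theorem union_le_add_sum_singleton (hsub : ∀ S T : Finset V, f (S ∪ T) + f (S ∩ T) ≤ f S + f T)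
    (hnorm : f ∅ = 0) {A D : Finset V} (hdisj : Disjoint A D) :
    f (A ∪ D) ≤ f A + ∑ j ∈ D, f {j} := by
  induction D using Finset.induction_on with
  | empty => simp
  | insert j D hjD ih =>
    rw [disjoint_insert_right] at hdisj
    have hj : Disjoint (A ∪ D) {j} := by simp [hjD, hdisj.1]
    calc f (A ∪ insert j D) = f (A ∪ D ∪ {j}) := by rw [union_insert, insert_eq, union_comm]
      _ ≤ f (A ∪ D) + f {j} := le_add_of_disjoint hsub hnorm hj
      _ ≤ f A + ∑ i ∈ insert j D, f {i} := by
        rw [sum_insert hjD]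
        linarith [ih hdisj.2]

theorem sdiff_le_sub_sum_gain (hsub : ∀ S T : Finset V, f (S ∪ T) + f (S ∩ T) ≤ f S + f T)
    {X D : Finset V} (hDX : D ⊆ X) : f (X \ D) ≤ f X - ∑ j ∈ D, (f X - f (X \ {j})) := by
  induction D using Finset.induction_on with
  | empty => simp
  | insert j D hjD ih =>
    rw [insert_subset_iff] at hDX
    have hunion : (X \ D) ∪ (X \ {j}) = X := by
      ext x; by_cases x = j <;> simp_all
    have hinter : (X \ D) ∩ (X \ {j}) = X \ insert j D := by
      ext; simp only [mem_inter, mem_sdiff, mem_insert, mem_singleton]; tauto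
    have hstep := hsub (X \ D) (X \ {j})
    rw [hunion, hinter] at hstep
    rw [sum_insert hjD]
    linarith [ih hDX.2]

end Submodular

theorem modular_upper_bound_one_general
    {V : Type*} [DecidableEq V]
    (f : Finset V → ℝ)
    (hsub : ∀ S T : Finset V, f (S ∪ T) + f (S ∩ T) ≤ f S + f T)
    (hnorm : f ∅ = 0)
    (X : Finset V)
    (m : Finset V → ℝ)
    (hm : ∀ Y : Finset V, m Y =
      f X - ∑ j ∈ X \ Y, (f ((X \ {j}) ∪ {j}) - f (X \ {j}))
          + ∑ j ∈ Y \ X, f {j}) :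
    (∀ Y : Finset V, f Y ≤ m Y) ∧ m X = f X := by
  refine ⟨fun Y => ?_, by simp [hm X]⟩
  have hgain : ∀ j ∈ X \ Y, f ((X \ {j}) ∪ {j}) - f (X \ {j}) = f X - f (X \ {j}) :=
    fun j hj => by rw [sdiff_union_of_subset (singleton_subset_iff.2 (mem_sdiff.1 hj).1)]
  have hdown : f (X ∩ Y) ≤ f X - ∑ j ∈ X \ Y, (f X - f (X \ {j})) := by
    simpa only [sdiff_sdiff_self_left] using
      Submodular.sdiff_le_sub_sum_gain hsub (D := X \ Y) sdiff_subset
  have hup : f Y ≤ f (X ∩ Y) + ∑ j ∈ Y \ X, f {j} :=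
    calc f Y = f ((Y ∩ X) ∪ (Y \ X)) := by rw [union_comm, sdiff_union_inter]
      _ ≤ f (Y ∩ X) + ∑ j ∈ Y \ X, f {j} :=
        Submodular.union_le_add_sum_singleton hsub hnorm (disjoint_sdiff_inter Y X).symm
      _ = f (X ∩ Y) + ∑ j ∈ Y \ X, f {j} := by rw [inter_comm]
  rw [hm Y, sum_congr rfl hgain]
  linarith

/-- The modular function `m^f_{X,1}` is an upper bound of the
normalized submodular function `f`, tight at `X`. -/
theorem modular_upper_bound_one
    {V : Type*} [Fintype V] [DecidableEq V]
    (f : Finset V → ℝ)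
    (hsub : ∀ S T : Finset V, f (S ∪ T) + f (S ∩ T) ≤ f S + f T)
    (hnorm : f ∅ = 0)
    (X : Finset V)
    (m : Finset V → ℝ)
    (hm : ∀ Y : Finset V, m Y =
      f X - ∑ j ∈ X \ Y, (f ((X \ {j}) ∪ {j}) - f (X \ {j}))
          + ∑ j ∈ Y \ X, f {j}) :
    (∀ Y : Finset V, f Y ≤ m Y) ∧ m X = f X :=
  modular_upper_bound_one_general f hsub hnorm X m hm
end

section
/- Let V be a finite ground set, f : 2^V → ℝ a normalized submodular set function, and X ⊆ V. Define m^f_{X,2}(Y) = f(X) − Σ_{j ∈ X∖Y} f(j | V∖{j}) + Σ_{j ∈ Y∖X} f(j | X). Then m^f_{X,2}(Y) ≥ f(Y) for every Y ⊆ V, and m^f_{X,2}(X) = f(X). (That is, m^f_{X,2} is a modular upper bound of f that is tight at X.) -/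
lemma aux_upper
    {V : Type*} [Fintype V] [DecidableEq V]
    (f : Finset V → ℝ)
    (hsub : ∀ S T : Finset V, f (S ∪ T) + f (S ∩ T) ≤ f S + f T)
    (X : Finset V) :
    ∀ A : Finset V, Disjoint A X →
      f (X ∪ A) ≤ f X + ∑ j ∈ A, (f (X ∪ {j}) - f X) := by
  intro A
  induction A using Finset.induction_on with
  | empty => simp
  | @insert a A ha ih =>
    intro hd
    have hdA : Disjoint A X := (Finset.disjoint_insert_left.mp hd).2
    have haX : a ∉ X := (Finset.disjoint_insert_left.mp hd).1
    have h1 := hsub (X ∪ A) (X ∪ {a})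
    have hcap : (X ∪ A) ∩ (X ∪ {a}) = X := by
      ext x
      simp only [Finset.mem_inter, Finset.mem_union, Finset.mem_singleton]
      constructor
      · rintro ⟨hx1 | hx1, hx2 | hx2⟩
        · exact hx1
        · exact hx1
        · exact hx2
        · subst hx2; exact absurd hx1 ha
      · intro hx; exact ⟨Or.inl hx, Or.inl hx⟩
    have hcup : (X ∪ A) ∪ (X ∪ {a}) = X ∪ insert a A := by
      ext x
      simp only [Finset.mem_union, Finset.mem_singleton, Finset.mem_insert]
      tauto
    rw [hcap, hcup] at h1
    have h2 := ih hdA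
    rw [Finset.sum_insert ha]
    linarith

lemma aux_lower
    {V : Type*} [Fintype V] [DecidableEq V]
    (f : Finset V → ℝ)
    (hsub : ∀ S T : Finset V, f (S ∪ T) + f (S ∩ T) ≤ f S + f T)
    (Y : Finset V) :
    ∀ B : Finset V, Disjoint B Y →
      f Y + ∑ j ∈ B, (f Finset.univ - f (Finset.univ \ {j})) ≤ f (Y ∪ B) := by
  intro B
  induction B using Finset.induction_on with
  | empty => simp
  | @insert b B hb ih =>
    intro hd
    have hdB : Disjoint B Y := (Finset.disjoint_insert_left.mp hd).2
    have hbY : b ∉ Y := (Finset.disjoint_insert_left.mp hd).1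
    have h1 := hsub (Y ∪ B ∪ {b}) (Finset.univ \ {b})
    have hcup : (Y ∪ B ∪ {b}) ∪ (Finset.univ \ {b}) = Finset.univ := by
      ext x
      simp only [Finset.mem_union, Finset.mem_sdiff, Finset.mem_univ, Finset.mem_singleton,
        true_and, iff_true]
      by_cases h : x = b
      · exact Or.inl (Or.inr h)
      · exact Or.inr h
    have hcap : (Y ∪ B ∪ {b}) ∩ (Finset.univ \ {b}) = Y ∪ B := by
      ext x
      simp only [Finset.mem_inter, Finset.mem_union, Finset.mem_sdiff, Finset.mem_univ,
        Finset.mem_singleton, true_and]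
      constructor
      · rintro ⟨hx1 | hx1, hx2⟩
        · exact hx1
        · exact absurd hx1 hx2
      · intro hx
        refine ⟨Or.inl hx, fun h => ?_⟩
        subst h
        rcases hx with hx | hx
        · exact hbY hx
        · exact hb hx
    rw [hcup, hcap] at h1
    have h2 := ih hdB
    have hYB : Y ∪ insert b B = Y ∪ B ∪ {b} := by
      ext x
      simp only [Finset.mem_union, Finset.mem_insert, Finset.mem_singleton]
      tauto
    rw [Finset.sum_insert hb, hYB]
    linarith

/-- The modular function `m^f_{X,2}` is an upper bound of the
normalized submodular function `f`, tight at `X`. -/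
theorem modular_upper_bound_two
    {V : Type*} [Fintype V] [DecidableEq V]
    (f : Finset V → ℝ)
    (hsub : ∀ S T : Finset V, f (S ∪ T) + f (S ∩ T) ≤ f S + f T)
    (hnorm : f ∅ = 0)
    (X : Finset V)
    (m : Finset V → ℝ)
    (hm : ∀ Y : Finset V, m Y =
      f X - ∑ j ∈ X \ Y, (f ((Finset.univ \ {j}) ∪ {j}) - f (Finset.univ \ {j}))
          + ∑ j ∈ Y \ X, (f (X ∪ {j}) - f X)) :
    (∀ Y : Finset V, f Y ≤ m Y) ∧ m X = f X := by
  constructor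
  · intro Y
    rw [hm Y]
    have hsimp : ∀ j : V, (Finset.univ \ {j}) ∪ {j} = (Finset.univ : Finset V) := by
      intro j
      ext x
      simp only [Finset.mem_union, Finset.mem_sdiff, Finset.mem_univ, Finset.mem_singleton,
        true_and, iff_true]
      by_cases h : x = j
      · exact Or.inr h
      · exact Or.inl h
    have hsum : ∑ j ∈ X \ Y, (f ((Finset.univ \ {j}) ∪ {j}) - f (Finset.univ \ {j}))
        = ∑ j ∈ X \ Y, (f Finset.univ - f (Finset.univ \ {j})) := by
      apply Finset.sum_congr rfl
      intro j _
      rw [hsimp j]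
    rw [hsum]
    have h1 := aux_upper f hsub X (Y \ X) (Finset.sdiff_disjoint)
    have h2 := aux_lower f hsub Y (X \ Y) (Finset.sdiff_disjoint)
    have e1 : X ∪ (Y \ X) = X ∪ Y := Finset.union_sdiff_self_eq_union
    have e2 : Y ∪ (X \ Y) = X ∪ Y := by
      rw [Finset.union_sdiff_self_eq_union, Finset.union_comm]
    rw [e1] at h1
    rw [e2] at h2
    linarith
  · rw [hm X]
    simp
end

section
/- Let V be a finite ground set and f : 2^V → ℝ a polymatroid function with f({j}) > 0 for all j ∈ V, and let κ_f be its total curvature. Then for every nonempty X ⊆ V, (1 + (|X| − 1)(1 − κ_f)) · Σ_{j∈X} f({j}) ≤ |X| · f(X). (Equivalently, the modular upper bound Σ_{j∈X} f({j}) exceeds f(X) by a factor of at most |X| / (1 + (|X| − 1)(1 − κ_f)).) -/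
/-- curvature-dependent bound relating the modular upper bound
`Σ_{j∈X} f({j})` to `f(X)` for a polymatroid function `f` with total curvature `κ`. -/
theorem curvature_modular_upper_bound
    {V : Type*} [Fintype V] [DecidableEq V] [Nonempty V]
    (f : Finset V → ℝ)
    (hsub : ∀ S T : Finset V, f (S ∪ T) + f (S ∩ T) ≤ f S + f T)
    (hmono : ∀ S T : Finset V, S ⊆ T → f S ≤ f T)
    (hnorm : f ∅ = 0)
    (hpos : ∀ j : V, 0 < f {j})
    (κ : ℝ)
    (hκ : κ = 1 - Finset.univ.inf' Finset.univ_nonempty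
      (fun j : V => (f Finset.univ - f (Finset.univ \ {j})) / f {j})) :
    ∀ X : Finset V, X.Nonempty →
      (1 + ((X.card : ℝ) - 1) * (1 - κ)) * ∑ j ∈ X, f {j} ≤ (X.card : ℝ) * f X := by
  set c : ℝ := Finset.univ.inf' Finset.univ_nonempty
      (fun j : V => (f Finset.univ - f (Finset.univ \ {j})) / f {j}) with hc
  have hkc : 1 - κ = c := by rw [hκ]; ring
  -- marginal gain bound: adding b to any set S (b ∉ S) gains at least c * f {b}
  have hgain : ∀ (b : V) (S : Finset V), b ∉ S → f S + c * f {b} ≤ f (insert b S) := by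
    intro b S hb
    have h1 : c ≤ (f Finset.univ - f (Finset.univ \ {b})) / f {b} :=
      Finset.inf'_le _ (Finset.mem_univ b)
    have h2 : c * f {b} ≤ f Finset.univ - f (Finset.univ \ {b}) := by
      rw [← le_div_iff₀ (hpos b)]; exact h1
    have hU : insert b S ∪ (Finset.univ \ {b}) = Finset.univ := by
      ext x; simp; tauto
    have hI : insert b S ∩ (Finset.univ \ {b}) = S := by
      ext x
      simp only [Finset.mem_inter, Finset.mem_insert, Finset.mem_sdiff,
        Finset.mem_univ, Finset.mem_singleton, true_and]
      constructor
      · rintro ⟨h | h, h2⟩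
        · exact absurd h h2
        · exact h
      · intro h; exact ⟨Or.inr h, fun he => hb (he ▸ h)⟩
    have h3 := hsub (insert b S) (Finset.univ \ {b})
    rw [hU, hI] at h3
    linarith
  -- key lemma: f {a} + c * Σ_{i ∈ s} f {i} ≤ f (insert a s) when a ∉ s
  have key : ∀ (s : Finset V) (a : V), a ∉ s →
      f {a} + c * ∑ i ∈ s, f {i} ≤ f (insert a s) := by
    intro s
    induction s using Finset.induction_on with
    | empty => intro a _; simp
    | @insert b t hbt ih =>
      intro a ha
      have hab : a ≠ b := fun h => ha (h ▸ Finset.mem_insert_self b t)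
      have hat : a ∉ t := fun h => ha (Finset.mem_insert_of_mem h)
      have h1 := ih a hat
      have hb' : b ∉ insert a t := by
        simp only [Finset.mem_insert, not_or]
        exact ⟨fun h => hab h.symm, hbt⟩
      have h2 := hgain b (insert a t) hb'
      have hcomm : insert b (insert a t) = insert a (insert b t) := Finset.insert_comm b a t
      rw [hcomm] at h2
      rw [Finset.sum_insert hbt]
      linarith
  intro X hX
  -- for each j ∈ X : f {j} + c * Σ_{i ∈ X.erase j} f {i} ≤ f X
  have hkey : ∀ j ∈ X, f {j} + c * ∑ i ∈ X.erase j, f {i} ≤ f X := by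
    intro j hj
    have := key (X.erase j) j (Finset.notMem_erase j X)
    rwa [Finset.insert_erase hj] at this
  have hsum : ∀ j ∈ X, ∑ i ∈ X.erase j, f {i} = (∑ i ∈ X, f {i}) - f {j} := by
    intro j hj
    exact Finset.sum_erase_eq_sub hj
  have htot : ∑ j ∈ X, (f {j} + c * ((∑ i ∈ X, f {i}) - f {j})) ≤ ∑ j ∈ X, f X := by
    apply Finset.sum_le_sum
    intro j hj
    rw [← hsum j hj]
    exact hkey j hj
  have hL : ∑ j ∈ X, (f {j} + c * ((∑ i ∈ X, f {i}) - f {j}))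
      = (1 + ((X.card : ℝ) - 1) * c) * ∑ j ∈ X, f {j} := by
    rw [Finset.sum_add_distrib, ← Finset.mul_sum]
    have : ∑ j ∈ X, ((∑ i ∈ X, f {i}) - f {j})
        = (X.card : ℝ) * (∑ i ∈ X, f {i}) - ∑ j ∈ X, f {j} := by
      rw [Finset.sum_sub_distrib, Finset.sum_const, nsmul_eq_mul]
    rw [this]; ring
  have hR : ∑ j ∈ X, f X = (X.card : ℝ) * f X := by
    rw [Finset.sum_const, nsmul_eq_mul]
  rw [hkc]
  rw [hL, hR] at htot
  exact htot
end

section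
/- (Correctness of the SCSK-to-SCSC conversion, Theorem 1, second part.) Let V be a finite ground set, let f, g : 2^V → ℝ be polymatroid functions, let c > 0, σ ≥ 1, ρ ∈ (0,1], ε > 0, b > 0, and set b′ = b/(1+ε). Suppose X̂ ⊆ V satisfies g(X̂) ≥ ρ·c and f(X̂) ≤ σ·b, and suppose that every Y ⊆ V with f(Y) ≤ b′ satisfies g(Y) < c. Then every X* ⊆ V with g(X*) ≥ c satisfies f(X̂) ≤ σ(1+ε)·f(X*); that is, X̂ is a [(1+ε)σ, ρ] bi-criterion approximate solution to the problem min{ f(X) : g(X) ≥ c }. -/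
/-- correctness of the SCSK-to-SCSC conversion (Theorem 1, second part).
If `X̂` is a `[ρ, σ]` bi-criterion solution of SCSK at budget `b` with `g(X̂) ≥ ρ·c`,
and at the previous budget `b′ = b/(1+ε)` every feasible set has `g`-value below `c`,
then `X̂` is a `[(1+ε)σ, ρ]` bi-criterion solution of SCSC `min{f(X) : g(X) ≥ c}`. -/
theorem scsk_to_scsc_conversion
    {V : Type*} [Fintype V] [DecidableEq V]
    (f g : Finset V → ℝ)
    (hfsub : ∀ S T : Finset V, f (S ∪ T) + f (S ∩ T) ≤ f S + f T)
    (hfmono : ∀ S T : Finset V, S ⊆ T → f S ≤ f T)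
    (hfnorm : f ∅ = 0)
    (hgsub : ∀ S T : Finset V, g (S ∪ T) + g (S ∩ T) ≤ g S + g T)
    (hgmono : ∀ S T : Finset V, S ⊆ T → g S ≤ g T)
    (hgnorm : g ∅ = 0)
    (c σ ρ ε b b' : ℝ)
    (hc : 0 < c) (hσ : 1 ≤ σ) (hρ₀ : 0 < ρ) (hρ₁ : ρ ≤ 1)
    (hε : 0 < ε) (hb : 0 < b)
    (hb' : b' = b / (1 + ε))
    (Xhat : Finset V)
    (hXg : g Xhat ≥ ρ * c)
    (hXf : f Xhat ≤ σ * b)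
    (hprev : ∀ Y : Finset V, f Y ≤ b' → g Y < c) :
    ∀ Xstar : Finset V, g Xstar ≥ c → f Xhat ≤ σ * (1 + ε) * f Xstar := by
  intro Xstar hXstar
  have h1 : b' < f Xstar := by
    by_contra h
    exact absurd (hprev Xstar (le_of_not_gt h)) (not_lt.mpr hXstar)
  have hεpos : (0:ℝ) < 1 + ε := by linarith
  have hbf : b < (1 + ε) * f Xstar := by
    rw [hb', div_lt_iff₀ hεpos] at h1
    linarith [h1]
  calc f Xhat ≤ σ * b := hXf
    _ ≤ σ * ((1 + ε) * f Xstar) := by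
        apply mul_le_mul_of_nonneg_left (le_of_lt hbf) (by linarith)
    _ = σ * (1 + ε) * f Xstar := by ring
end

section
/- (Approximation guarantee of Iterated Submodular Set Cover, Theorem 3.) Let V be a finite ground set, let f, g : 2^V → ℝ be polymatroid functions with f({j}) > 0 for all j ∈ V, let κ_f be the total curvature of f, let c > 0, let H ≥ 1, and set K_g = 1 + max{ |X| : X ⊆ V, g(X) < c }. Suppose X¹ ⊆ V satisfies g(X¹) ≥ c and Σ_{j∈X¹} f({j}) ≤ H · Σ_{j∈Y} f({j}) for every Y ⊆ V with g(Y) ≥ c (i.e., X¹ is an H-approximate solution of the submodular set cover problem obtained by replacing f with its modular upper bound Σ_{j∈X} f({j})). Then for every X* ⊆ V with g(X*) ≥ c, (1 + (K_g − 1)(1 − κ_f)) · f(X¹) ≤ K_g · H · f(X*). -/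
open scoped Classical

/-- approximation guarantee of Iterated Submodular Set Cover (Theorem 3).
If `X¹` is an `H`-approximate solution of the surrogate set cover problem
`min{Σ_{j∈X} f({j}) : g(X) ≥ c}`, then `f(X¹)` is within a factor
`K_g·H / (1 + (K_g − 1)(1 − κ_f))` of the optimum of `min{f(X) : g(X) ≥ c}`. -/
theorem issc_approximation
    {V : Type*} [Fintype V] [DecidableEq V] [Nonempty V]
    (f g : Finset V → ℝ)
    (hfsub : ∀ S T : Finset V, f (S ∪ T) + f (S ∩ T) ≤ f S + f T)
    (hfmono : ∀ S T : Finset V, S ⊆ T → f S ≤ f T)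
    (hfnorm : f ∅ = 0)
    (hfpos : ∀ j : V, 0 < f {j})
    (hgsub : ∀ S T : Finset V, g (S ∪ T) + g (S ∩ T) ≤ g S + g T)
    (hgmono : ∀ S T : Finset V, S ⊆ T → g S ≤ g T)
    (hgnorm : g ∅ = 0)
    (κ : ℝ)
    (hκ : κ = 1 - Finset.univ.inf' Finset.univ_nonempty
      (fun j : V => (f Finset.univ - f (Finset.univ \ {j})) / f {j}))
    (c : ℝ) (hc : 0 < c)
    (H : ℝ) (hH : 1 ≤ H)
    (Kg : ℕ)
    (hKg : Kg = 1 + (Finset.univ.powerset.filter (fun X : Finset V => g X < c)).sup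
      (fun X : Finset V => X.card))
    (X1 : Finset V)
    (hX1feas : g X1 ≥ c)
    (hX1approx : ∀ Y : Finset V, g Y ≥ c → ∑ j ∈ X1, f {j} ≤ H * ∑ j ∈ Y, f {j}) :
    ∀ Xstar : Finset V, g Xstar ≥ c →
      (1 + ((Kg : ℝ) - 1) * (1 - κ)) * f X1 ≤ (Kg : ℝ) * H * f Xstar := by
  intro Xstar hXstar
  set t : ℝ := 1 - κ with ht
  -- basic facts about t = 1 - κ
  have htinf : t = Finset.univ.inf' Finset.univ_nonempty
      (fun j : V => (f Finset.univ - f (Finset.univ \ {j})) / f {j}) := by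
    rw [ht, hκ]; ring
  have ht0 : 0 ≤ t := by
    rw [htinf]
    apply Finset.le_inf'
    intro j _
    apply div_nonneg _ (le_of_lt (hfpos j))
    have := hfmono (Finset.univ \ {j}) Finset.univ (Finset.sdiff_subset)
    linarith
  have ht1 : t ≤ 1 := by
    rw [htinf]
    have hj : ∀ j : V, (f Finset.univ - f (Finset.univ \ {j})) / f {j} ≤ 1 := by
      intro j
      rw [div_le_one (hfpos j)]
      have h := hfsub {j} (Finset.univ \ {j})
      have h1 : ({j} : Finset V) ∪ (Finset.univ \ {j}) = Finset.univ := by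
        ext x; simp [em]
      have h2 : ({j} : Finset V) ∩ (Finset.univ \ {j}) = ∅ := by
        ext x; simp
      rw [h1, h2, hfnorm] at h
      linarith
    obtain ⟨j⟩ := ‹Nonempty V›
    exact le_trans (Finset.inf'_le _ (Finset.mem_univ j)) (hj j)
  -- the gain lemma: f S + t * f {j} ≤ f (insert j S) for j ∉ S
  have hgain : ∀ (S : Finset V) (j : V), j ∉ S → f S + t * f {j} ≤ f (insert j S) := by
    intro S j hj
    have h1 : t ≤ (f Finset.univ - f (Finset.univ \ {j})) / f {j} := by
      rw [htinf]; exact Finset.inf'_le _ (Finset.mem_univ j)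
    have h2 : t * f {j} ≤ f Finset.univ - f (Finset.univ \ {j}) := by
      rw [← le_div_iff₀ (hfpos j)]; exact h1
    have h3 := hfsub (insert j S) (Finset.univ \ {j})
    have h4 : (insert j S) ∪ (Finset.univ \ {j}) = Finset.univ := by
      ext x; simp only [Finset.mem_union, Finset.mem_insert, Finset.mem_sdiff,
        Finset.mem_univ, Finset.mem_singleton, true_and, iff_true]
      tauto
    have h5 : (insert j S) ∩ (Finset.univ \ {j}) = S := by
      ext x
      simp only [Finset.mem_inter, Finset.mem_insert, Finset.mem_sdiff,
        Finset.mem_univ, Finset.mem_singleton, true_and]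
      constructor
      · rintro ⟨h | h, hne⟩
        · exact absurd h hne
        · exact h
      · intro hx; exact ⟨Or.inr hx, fun hxj => hj (hxj ▸ hx)⟩
    rw [h4, h5] at h3
    linarith
  -- upper bound: f X ≤ ∑_{j∈X} f {j}
  have hupper : ∀ X : Finset V, f X ≤ ∑ j ∈ X, f {j} := by
    intro X
    induction X using Finset.induction_on with
    | empty => simp [hfnorm]
    | @insert j s hj ih =>
      rw [Finset.sum_insert hj]
      have h := hfsub {j} s
      have h1 : ({j} : Finset V) ∪ s = insert j s := by
        ext x; simp
      have h2 : ({j} : Finset V) ∩ s = ∅ := by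
        ext x; simp only [Finset.mem_inter, Finset.mem_singleton, Finset.notMem_empty,
          iff_false, not_and]
        rintro rfl; exact hj
      rw [h1, h2, hfnorm] at h
      linarith
  -- lower bound: f T + t * ∑_{j∈A} f {j} ≤ f (T ∪ A) for disjoint A, T
  have hlower : ∀ (A T : Finset V), Disjoint A T → f T + t * ∑ j ∈ A, f {j} ≤ f (T ∪ A) := by
    intro A
    induction A using Finset.induction_on with
    | empty => intro T _; simp
    | @insert j s hj ih =>
      intro T hdisj
      have hjT : j ∉ T := fun h => (Finset.disjoint_left.mp hdisj (Finset.mem_insert_self j s)) h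
      have hsT : Disjoint s T :=
        Finset.disjoint_left.mpr fun x hx => Finset.disjoint_left.mp hdisj (Finset.mem_insert_of_mem hx)
      have h1 := ih T hsT
      have h2 : j ∉ T ∪ s := by
        simp only [Finset.mem_union]
        rintro (h | h)
        · exact hjT h
        · exact hj h
      have h3 := hgain (T ∪ s) j h2
      have h4 : insert j (T ∪ s) = T ∪ insert j s := (Finset.union_insert j T s).symm
      rw [h4] at h3
      rw [Finset.sum_insert hj]
      nlinarith [hfpos j]
  -- find a minimal feasible subset X' of Xstar
  have hXstarmem : Xstar ∈ (Xstar.powerset.filter (fun X : Finset V => c ≤ g X)) := by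
    simp [Finset.mem_powerset, hXstar]
  obtain ⟨X', hX'mem, hX'min⟩ := Finset.exists_min_image
    (Xstar.powerset.filter (fun X : Finset V => c ≤ g X)) (fun X => X.card) ⟨Xstar, hXstarmem⟩
  simp only [Finset.mem_filter, Finset.mem_powerset] at hX'mem
  obtain ⟨hX'sub, hX'feas⟩ := hX'mem
  have hX'ne : X'.Nonempty := by
    rcases Finset.eq_empty_or_nonempty X' with h | h
    · exfalso; rw [h, hgnorm] at hX'feas; linarith
    · exact h
  -- card bound: X'.card ≤ Kg
  have hcard : X'.card ≤ Kg := by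
    obtain ⟨j, hjX'⟩ := hX'ne
    have herase : g (X'.erase j) < c := by
      by_contra h
      push_neg at h
      have hmem : X'.erase j ∈ Xstar.powerset.filter (fun X : Finset V => c ≤ g X) := by
        simp only [Finset.mem_filter, Finset.mem_powerset]
        exact ⟨(Finset.erase_subset j X').trans hX'sub, h⟩
      have := hX'min _ hmem
      have hlt : (X'.erase j).card < X'.card := Finset.card_erase_lt_of_mem hjX'
      omega
    have hmem2 : X'.erase j ∈ Finset.univ.powerset.filter (fun X : Finset V => g X < c) := by
      simp [herase]
    have hle : (X'.erase j).card ≤ (Finset.univ.powerset.filter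
        (fun X : Finset V => g X < c)).sup (fun X : Finset V => X.card) :=
      Finset.le_sup hmem2
    have hce : (X'.erase j).card = X'.card - 1 := Finset.card_erase_of_mem hjX'
    have hpos : 1 ≤ X'.card := Finset.card_pos.mpr ⟨j, hjX'⟩
    omega
  -- max singleton value in X'
  obtain ⟨j0, hj0mem, hj0max⟩ := Finset.exists_max_image X' (fun j => f {j}) hX'ne
  set m : ℝ := f {j0} with hm
  set S' : ℝ := ∑ j ∈ X', f {j} with hS'
  have hS'le : S' ≤ (Kg : ℝ) * m := by
    have h1 : S' ≤ X'.card • m := Finset.sum_le_card_nsmul X' _ m (fun x hx => hj0max x hx)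
    have h2 : (X'.card : ℝ) ≤ (Kg : ℝ) := by exact_mod_cast hcard
    have hm0 : 0 ≤ m := le_of_lt (hfpos j0)
    calc S' ≤ X'.card • m := h1
      _ = (X'.card : ℝ) * m := by rw [nsmul_eq_mul]
      _ ≤ (Kg : ℝ) * m := by nlinarith
  -- f X' ≥ m + t * (S' - m)
  have hfX' : m + t * (S' - m) ≤ f X' := by
    have h := hlower (X'.erase j0) {j0}
      (Finset.disjoint_singleton_right.mpr (Finset.notMem_erase j0 X'))
    have h1 : ({j0} : Finset V) ∪ X'.erase j0 = X' := by
      ext x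
      simp only [Finset.mem_union, Finset.mem_singleton, Finset.mem_erase]
      constructor
      · rintro (rfl | ⟨_, hx⟩)
        · exact hj0mem
        · exact hx
      · intro hx
        by_cases hxj : x = j0
        · exact Or.inl hxj
        · exact Or.inr ⟨hxj, hx⟩
    have h2 : ∑ j ∈ X'.erase j0, f {j} = S' - m := by
      rw [hS', hm, ← Finset.sum_erase_add X' _ hj0mem]; ring
    rw [h1, h2] at h
    have : f ({j0} : Finset V) = m := rfl
    linarith
  -- key: (1 + (Kg - 1) * t) * S' ≤ Kg * f X'
  have hKg1 : (1 : ℝ) ≤ (Kg : ℝ) := by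
    have : 1 ≤ Kg := by omega
    exact_mod_cast this
  have hkey : (1 + ((Kg : ℝ) - 1) * t) * S' ≤ (Kg : ℝ) * f X' := by
    nlinarith [hfX', hS'le, ht0, ht1, hKg1]
  -- chain everything
  have hS'0 : 0 ≤ S' := Finset.sum_nonneg fun j _ => le_of_lt (hfpos j)
  have hch1 : f X1 ≤ ∑ j ∈ X1, f {j} := hupper X1
  have hch2 : ∑ j ∈ X1, f {j} ≤ H * S' := hX1approx X' hX'feas
  have hch3 : f X' ≤ f Xstar := hfmono X' Xstar hX'sub
  have hfact : 0 ≤ 1 + ((Kg : ℝ) - 1) * t := by nlinarith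
  have hH0 : (0 : ℝ) ≤ H := by linarith
  have hmain : f X1 ≤ H * S' := hch1.trans hch2
  have hKgH : (0 : ℝ) ≤ (Kg : ℝ) * H := mul_nonneg (by positivity) hH0
  calc (1 + ((Kg : ℝ) - 1) * t) * f X1
      ≤ (1 + ((Kg : ℝ) - 1) * t) * (H * S') := mul_le_mul_of_nonneg_left hmain hfact
    _ = H * ((1 + ((Kg : ℝ) - 1) * t) * S') := by ring
    _ ≤ H * ((Kg : ℝ) * f X') := mul_le_mul_of_nonneg_left hkey hH0
    _ = (Kg : ℝ) * H * f X' := by ring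
    _ ≤ (Kg : ℝ) * H * f Xstar := mul_le_mul_of_nonneg_left hch3 hKgH
end

section
/- (Approximation guarantee of Iterated Submodular Cost Knapsack, Theorem 7.) Let V be a finite ground set, let f, g : 2^V → ℝ be polymatroid functions with f({j}) > 0 for all j ∈ V, let κ_f be the total curvature of f, let b > 0, let ρ ∈ [0,1], and set K_f = max{ |X| : X ⊆ V, f(X) ≤ b }, assumed to satisfy K_f ≥ 1. Suppose X¹ ⊆ V satisfies Σ_{j∈X¹} f({j}) ≤ b and g(X¹) ≥ ρ · g(Y) for every Y ⊆ V with Σ_{j∈Y} f({j}) ≤ b (i.e., X¹ is a ρ-approximate solution of the knapsack problem obtained by replacing f with its modular upper bound Σ_{j∈X} f({j})). Then for every X̃ ⊆ V with f(X̃) ≤ b·(1 + (K_f − 1)(1 − κ_f))/K_f, one has g(X¹) ≥ ρ · g(X̃). -/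
set_option maxHeartbeats 800000

open scoped Classical

/-- approximation guarantee of Iterated Submodular Cost Knapsack
(Theorem 7). If `X¹` is a `ρ`-approximate solution of the surrogate knapsack
problem `max{g(X) : Σ_{j∈X} f({j}) ≤ b}`, then `g(X¹) ≥ ρ·g(X̃)` where `X̃` is any
feasible set for the shrunken budget `b·(1 + (K_f − 1)(1 − κ_f))/K_f`. -/
theorem isk_approximation
    {V : Type*} [Fintype V] [DecidableEq V] [Nonempty V]
    (f g : Finset V → ℝ)
    (hfsub : ∀ S T : Finset V, f (S ∪ T) + f (S ∩ T) ≤ f S + f T)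
    (hfmono : ∀ S T : Finset V, S ⊆ T → f S ≤ f T)
    (hfnorm : f ∅ = 0)
    (hfpos : ∀ j : V, 0 < f {j})
    (hgsub : ∀ S T : Finset V, g (S ∪ T) + g (S ∩ T) ≤ g S + g T)
    (hgmono : ∀ S T : Finset V, S ⊆ T → g S ≤ g T)
    (hgnorm : g ∅ = 0)
    (κ : ℝ)
    (hκ : κ = 1 - Finset.univ.inf' Finset.univ_nonempty
      (fun j : V => (f Finset.univ - f (Finset.univ \ {j})) / f {j}))
    (b : ℝ) (hb : 0 < b)
    (ρ : ℝ) (hρ₀ : 0 ≤ ρ) (hρ₁ : ρ ≤ 1)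
    (Kf : ℕ)
    (hKf : Kf = (Finset.univ.powerset.filter (fun X : Finset V => f X ≤ b)).sup
      (fun X : Finset V => X.card))
    (hKf1 : 1 ≤ Kf)
    (X1 : Finset V)
    (hX1feas : ∑ j ∈ X1, f {j} ≤ b)
    (hX1approx : ∀ Y : Finset V, (∑ j ∈ Y, f {j}) ≤ b → g X1 ≥ ρ * g Y) :
    ∀ Xtilde : Finset V,
      f Xtilde ≤ b * (1 + ((Kf : ℝ) - 1) * (1 - κ)) / (Kf : ℝ) →
      g X1 ≥ ρ * g Xtilde := by
  intro Xt hXt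
  set c : ℝ := Finset.univ.inf' Finset.univ_nonempty
      (fun j : V => (f Finset.univ - f (Finset.univ \ {j})) / f {j}) with hc
  have hκc : 1 - κ = c := by rw [hκ]; ring
  have hc0 : 0 ≤ c := by
    apply Finset.le_inf'
    intro j _
    apply div_nonneg _ (hfpos j).le
    have := hfmono (Finset.univ \ {j}) Finset.univ Finset.sdiff_subset
    linarith
  have hc1 : c ≤ 1 := by
    obtain ⟨j⟩ := ‹Nonempty V›
    have h1 : c ≤ (f Finset.univ - f (Finset.univ \ {j})) / f {j} :=
      Finset.inf'_le _ (Finset.mem_univ j)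
    have h2 : (f Finset.univ - f (Finset.univ \ {j})) / f {j} ≤ 1 := by
      rw [div_le_one (hfpos j)]
      have hs := hfsub (Finset.univ \ {j}) {j}
      have hun : (Finset.univ \ {j}) ∪ {j} = (Finset.univ : Finset V) := by
        simp [Finset.sdiff_union_self_eq_union]
      have hint : (Finset.univ \ {j}) ∩ {j} = (∅ : Finset V) := by
        simp
      rw [hun, hint, hfnorm] at hs
      linarith
    linarith
  -- gain lower bound
  have hA : ∀ (S : Finset V) (i : V), i ∉ S → f S + c * f {i} ≤ f (insert i S) := by
    intro S i hi
    have hsub := hfsub (insert i S) (Finset.univ \ {i})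
    have hun : insert i S ∪ (Finset.univ \ {i}) = (Finset.univ : Finset V) := by
      ext x
      simp only [Finset.mem_union, Finset.mem_insert, Finset.mem_sdiff, Finset.mem_univ,
        Finset.mem_singleton, true_and, iff_true]
      by_cases hx : x = i
      · exact Or.inl (Or.inl hx)
      · exact Or.inr hx
    have hint : insert i S ∩ (Finset.univ \ {i}) = S := by
      ext x
      simp only [Finset.mem_inter, Finset.mem_insert, Finset.mem_sdiff, Finset.mem_univ,
        Finset.mem_singleton, true_and]
      constructor
      · rintro ⟨(rfl | hx), hne⟩
        · exact absurd rfl hne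
        · exact hx
      · intro hx
        exact ⟨Or.inr hx, fun h => hi (h ▸ hx)⟩
    rw [hun, hint] at hsub
    have hci : c ≤ (f Finset.univ - f (Finset.univ \ {i})) / f {i} :=
      Finset.inf'_le _ (Finset.mem_univ i)
    rw [le_div_iff₀ (hfpos i)] at hci
    linarith
  have hB : ∀ (T S : Finset V), Disjoint S T → f S + c * ∑ i ∈ T, f {i} ≤ f (S ∪ T) := by
    intro T
    induction T using Finset.induction_on with
    | empty => intro S _; simp
    | @insert a T ha ih =>
      intro S hdisj
      have haS : a ∉ S := fun h => (Finset.disjoint_left.mp hdisj h) (Finset.mem_insert_self a T)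
      have hdisj' : Disjoint S T :=
        hdisj.mono_right (Finset.subset_insert a T)
      have haST : a ∉ S ∪ T := by
        simp only [Finset.mem_union, not_or]
        exact ⟨haS, ha⟩
      have h1 := ih S hdisj'
      have h2 := hA (S ∪ T) a haST
      have hUeq : S ∪ insert a T = insert a (S ∪ T) := Finset.union_insert a S T
      rw [hUeq, Finset.sum_insert ha]
      have hfa : 0 < f {a} := hfpos a
      nlinarith [hfa, hc0]
  set SB : ℝ := ∑ j ∈ Xt, f {j} with hSB
  have hC : ∀ j ∈ Xt, f {j} + c * (SB - f {j}) ≤ f Xt := by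
    intro j hj
    have hdisj : Disjoint ({j} : Finset V) (Xt.erase j) := by
      simp [Finset.disjoint_left]
    have h := hB (Xt.erase j) {j} hdisj
    have hUeq : ({j} : Finset V) ∪ Xt.erase j = Xt := by
      ext x; by_cases hx : x = j <;> simp [hx, hj]
    rw [hUeq] at h
    have hsum : ∑ i ∈ Xt.erase j, f {i} = SB - f {j} :=
      Finset.sum_erase_eq_sub hj
    rw [hsum] at h
    exact h
  by_cases hXe : Xt = ∅
  · apply hX1approx
    rw [hXe, Finset.sum_empty]
    exact hb.le
  -- Xt nonempty
  have hn1 : 1 ≤ Xt.card := Finset.card_pos.mpr (Finset.nonempty_of_ne_empty hXe)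
  set n : ℕ := Xt.card with hn
  -- sum of hC
  have hCsum : (1 + ((n : ℝ) - 1) * c) * SB ≤ (n : ℝ) * f Xt := by
    have h := Finset.sum_le_sum hC
    rw [Finset.sum_const, ← hn, nsmul_eq_mul] at h
    have hL : ∑ j ∈ Xt, (f {j} + c * (SB - f {j})) = SB + c * ((n : ℝ) * SB - SB) := by
      rw [Finset.sum_add_distrib, ← hSB, ← Finset.mul_sum, Finset.sum_sub_distrib,
        Finset.sum_const, ← hSB, ← hn, nsmul_eq_mul]
    rw [hL] at h
    nlinarith [h]
  -- n ≤ Kf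
  have hfXt0 : 0 ≤ f Xt := by
    have := hfmono ∅ Xt (Finset.empty_subset Xt)
    linarith [hfnorm ▸ this]
  have hKpos : (0 : ℝ) < (Kf : ℝ) := by exact_mod_cast Nat.lt_of_lt_of_le Nat.zero_lt_one hKf1
  have hK1 : (1 : ℝ) ≤ (Kf : ℝ) := by exact_mod_cast hKf1
  have hDK : (0 : ℝ) < 1 + ((Kf : ℝ) - 1) * c := by nlinarith
  have hXtb : f Xt ≤ b := by
    have hnum : 1 + ((Kf : ℝ) - 1) * c ≤ (Kf : ℝ) := by nlinarith
    rw [hκc] at hXt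
    calc f Xt ≤ b * (1 + ((Kf : ℝ) - 1) * c) / (Kf : ℝ) := hXt
      _ ≤ b := by
        rw [div_le_iff₀ hKpos]
        nlinarith
  have hnK : (n : ℝ) ≤ (Kf : ℝ) := by
    have : n ≤ Kf := by
      rw [hn, hKf]
      apply Finset.le_sup (f := fun X : Finset V => X.card)
      simp only [Finset.mem_filter, Finset.mem_powerset]
      exact ⟨Finset.subset_univ Xt, hXtb⟩
    exact_mod_cast this
  have hn1R : (1 : ℝ) ≤ (n : ℝ) := by exact_mod_cast hn1
  have hDn : (0 : ℝ) < 1 + ((n : ℝ) - 1) * c := by nlinarith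
  -- cross bound : n * DK ≤ K * Dn
  have hcross : (n : ℝ) * (1 + ((Kf : ℝ) - 1) * c) ≤ (Kf : ℝ) * (1 + ((n : ℝ) - 1) * c) := by
    nlinarith [hnK, hc1, hc0]
  have hKfXt : (Kf : ℝ) * f Xt ≤ b * (1 + ((Kf : ℝ) - 1) * c) := by
    have hXt' : f Xt ≤ b * (1 + ((Kf : ℝ) - 1) * c) / (Kf : ℝ) := by
      rw [← hκc]; exact hXt
    rw [le_div_iff₀ hKpos] at hXt'
    linarith [mul_comm (Kf : ℝ) (f Xt)]
  have hSBb : SB ≤ b := by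
    have h1 := mul_le_mul_of_nonneg_left hCsum hKpos.le
    have h2 := mul_le_mul_of_nonneg_left hKfXt (Nat.cast_nonneg n : (0:ℝ) ≤ (n:ℝ))
    have h3 := mul_le_mul_of_nonneg_left hcross hb.le
    have h5 : (0:ℝ) < (Kf:ℝ) * (1 + ((n:ℝ)-1)*c) := mul_pos hKpos hDn
    have key : (Kf:ℝ) * (1 + ((n:ℝ)-1)*c) * SB ≤ (Kf:ℝ) * (1 + ((n:ℝ)-1)*c) * b := by
      nlinarith [h1, h2, h3]
    exact le_of_mul_le_mul_left key h5
  exact hX1approx Xt hSBb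
end

section
/- (The curve-normalized function is a polymatroid function.) Let V be a finite ground set, let f : 2^V → ℝ be a polymatroid function with f({j}) > 0 for all j ∈ V, and let κ_f be its total curvature, assumed to satisfy 0 < κ_f ≤ 1. Define the κ_f-curve-normalized version of f by f^κ(X) = ( f(X) − (1 − κ_f)·Σ_{j∈X} f({j}) ) / κ_f. Then f^κ is a polymatroid function: it is normalized, monotone non-decreasing, and submodular (in particular f^κ(X) ≥ 0 for all X ⊆ V). -/
/-! The curvature bound says that every gain `f (j | V ∖ {j})` is at least `(1 - κ) f {j}`, and by
diminishing returns so is every gain `f (j | A)`. Hence subtracting the modular function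
`X ↦ (1 - κ) ∑_{j ∈ X} f {j}` keeps `f` monotone, and it keeps `f` submodular because a modular
function satisfies the submodular inequality with equality; dividing by `κ > 0` changes nothing. -/

open Finset

def IsSubmodular {α : Type*} [DecidableEq α] (f : Finset α → ℝ) : Prop :=
  ∀ S T : Finset α, f (S ∪ T) + f (S ∩ T) ≤ f S + f T

namespace IsSubmodular

variable {α : Type*} [DecidableEq α] {f : Finset α → ℝ}

theorem gain_le_gain_of_subset (hf : IsSubmodular f) {A B : Finset α} {j : α}
    (hAB : A ⊆ B) (hjB : j ∉ B) :
    f (insert j B) - f B ≤ f (insert j A) - f A := by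
  have hunion : insert j A ∪ B = insert j B := by
    rw [insert_union, union_eq_right.mpr hAB]
  have hinter : insert j A ∩ B = A := by
    rw [insert_inter_of_notMem hjB, inter_eq_left.mpr hAB]
  have := hf (insert j A) B
  rw [hunion, hinter] at this
  linarith

theorem sub_sum (hf : IsSubmodular f) (c : α → ℝ) :
    IsSubmodular fun X => f X - ∑ j ∈ X, c j := by
  intro S T
  have := sum_union_inter (s₁ := S) (s₂ := T) (f := c)
  linarith [hf S T]

theorem div_const (hf : IsSubmodular f) {c : ℝ} (hc : 0 ≤ c) :
    IsSubmodular fun X => f X / c := by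
  intro S T
  rw [← add_div, ← add_div]
  exact div_le_div_of_nonneg_right (hf S T) hc

end IsSubmodular

section Gains

variable {α : Type*} [DecidableEq α] {f : Finset α → ℝ} {c : α → ℝ}

theorem add_sum_le_of_le_gain (hc : ∀ (A : Finset α) (j : α), j ∉ A → c j ≤ f (insert j A) - f A)
    (S : Finset α) {D : Finset α} (hSD : Disjoint S D) :
    f S + ∑ j ∈ D, c j ≤ f (S ∪ D) := by
  induction D using Finset.induction_on with
  | empty => simp
  | @insert a D haD ih =>
    rw [disjoint_insert_right] at hSD
    have hgain := hc (S ∪ D) a (by simp [hSD.1, haD])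
    rw [sum_insert haD, union_insert]
    linarith [ih hSD.2]

theorem monotone_sub_sum_of_le_gain
    (hc : ∀ (A : Finset α) (j : α), j ∉ A → c j ≤ f (insert j A) - f A) :
    Monotone fun X => f X - ∑ j ∈ X, c j := by
  intro S T hST
  have := add_sum_le_of_le_gain hc S (disjoint_sdiff (s := S) (t := T))
  rw [union_sdiff_of_subset hST] at this
  simp only [← sum_sdiff hST]
  linarith

end Gains

noncomputable def totalCurvature {V : Type*} [Fintype V] [DecidableEq V] [Nonempty V]
    (f : Finset V → ℝ) : ℝ :=
  1 - univ.inf' univ_nonempty fun j : V => (f univ - f (univ \ {j})) / f {j}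

theorem one_sub_totalCurvature_mul_le_gain {V : Type*} [Fintype V] [DecidableEq V] [Nonempty V]
    {f : Finset V → ℝ} (hf : IsSubmodular f) (hfpos : ∀ j : V, 0 < f {j})
    (A : Finset V) (j : V) (hjA : j ∉ A) :
    (1 - totalCurvature f) * f {j} ≤ f (insert j A) - f A := by
  rw [totalCurvature, sub_sub_cancel, ← le_div_iff₀ (hfpos j)]
  refine (inf'_le _ (mem_univ j)).trans (div_le_div_of_nonneg_right ?_ (hfpos j).le)
  have hA : A ⊆ univ \ {j} := subset_sdiff.mpr ⟨subset_univ A, disjoint_singleton_right.mpr hjA⟩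
  have hgain := hf.gain_le_gain_of_subset hA (notMem_sdiff_of_mem_right (mem_singleton_self j))
  rwa [insert_eq, union_sdiff_of_subset (subset_univ _)] at hgain

theorem curve_normalized_is_polymatroid_general
    {V : Type*} [Fintype V] [DecidableEq V] [Nonempty V]
    (f : Finset V → ℝ)
    (hfsub : ∀ S T : Finset V, f (S ∪ T) + f (S ∩ T) ≤ f S + f T)
    (hfnorm : f ∅ = 0)
    (hfpos : ∀ j : V, 0 < f {j})
    (κ : ℝ)
    (hκ : κ = 1 - Finset.univ.inf' Finset.univ_nonempty
      (fun j : V => (f Finset.univ - f (Finset.univ \ {j})) / f {j}))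
    (hκ₀ : 0 < κ)
    (fκ : Finset V → ℝ)
    (hfκ : ∀ X : Finset V, fκ X = (f X - (1 - κ) * ∑ j ∈ X, f {j}) / κ) :
    fκ ∅ = 0 ∧
    (∀ S T : Finset V, S ⊆ T → fκ S ≤ fκ T) ∧
    (∀ S T : Finset V, fκ (S ∪ T) + fκ (S ∩ T) ≤ fκ S + fκ T) ∧
    (∀ X : Finset V, 0 ≤ fκ X) := by
  have hfκ_eq : fκ = fun X => (f X - ∑ j ∈ X, (1 - κ) * f {j}) / κ := by
    funext X
    rw [hfκ, mul_sum]
  have hgain : ∀ (A : Finset V) (j : V), j ∉ A → (1 - κ) * f {j} ≤ f (insert j A) - f A := by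
    subst hκ
    exact one_sub_totalCurvature_mul_le_gain hfsub hfpos
  have hempty : fκ ∅ = 0 := by simp [hfκ_eq, hfnorm]
  have hmono : Monotone fκ := by
    rw [hfκ_eq]
    exact (monotone_sub_sum_of_le_gain hgain).div_const hκ₀.le
  refine ⟨hempty, fun S T => @hmono S T, ?_, fun X => hempty ▸ hmono (empty_subset X)⟩
  rw [hfκ_eq]
  exact (IsSubmodular.sub_sum hfsub _).div_const hκ₀.le

/-- the `κ_f`-curve-normalized version `f^κ` of a polymatroid
function `f` with total curvature `κ_f ∈ (0,1]` is itself a polymatroid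
function: normalized, monotone non-decreasing and submodular (in particular
nonnegative). -/
theorem curve_normalized_is_polymatroid
    {V : Type*} [Fintype V] [DecidableEq V] [Nonempty V]
    (f : Finset V → ℝ)
    (hfsub : ∀ S T : Finset V, f (S ∪ T) + f (S ∩ T) ≤ f S + f T)
    (hfmono : ∀ S T : Finset V, S ⊆ T → f S ≤ f T)
    (hfnorm : f ∅ = 0)
    (hfpos : ∀ j : V, 0 < f {j})
    (κ : ℝ)
    (hκ : κ = 1 - Finset.univ.inf' Finset.univ_nonempty
      (fun j : V => (f Finset.univ - f (Finset.univ \ {j})) / f {j}))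
    (hκ₀ : 0 < κ) (hκ₁ : κ ≤ 1)
    (fκ : Finset V → ℝ)
    (hfκ : ∀ X : Finset V, fκ X = (f X - (1 - κ) * ∑ j ∈ X, f {j}) / κ) :
    fκ ∅ = 0 ∧
    (∀ S T : Finset V, S ⊆ T → fκ S ≤ fκ T) ∧
    (∀ S T : Finset V, fκ (S ∪ T) + fκ (S ∩ T) ≤ fκ S + fκ T) ∧
    (∀ X : Finset V, 0 ≤ fκ X) :=
  curve_normalized_is_polymatroid_general f hfsub hfnorm hfpos κ hκ hκ₀ fκ hfκ
end

section
/- (Curvature-dependent ellipsoidal approximation bound, the lemma underlying Theorem 4.) Let V be a finite ground set, let f : 2^V → ℝ be a polymatroid function with f({j}) > 0 for all j ∈ V, let κ_f be its total curvature with 0 < κ_f ≤ 1, and let f^κ(X) = ( f(X) − (1 − κ_f)·Σ_{j∈X} f({j}) ) / κ_f be its κ_f-curve-normalized version. Suppose w : V → ℝ₊ is a nonnegative weight function with w(X) = Σ_{j∈X} w(j) and α ≥ 1 is such that √(w(X)) ≤ f^κ(X) ≤ α·√(w(X)) for all X ⊆ V. Define f^{ea}(X) = κ_f·√(w(X)) +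 (1 − κ_f)·Σ_{j∈X} f({j}). Then for all X ⊆ V, f^{ea}(X) ≤ f(X) ≤ ( α / (1 + (α − 1)(1 − κ_f)) ) · f^{ea}(X). -/
/-!
Writing `F(X) = Σ_{j∈X} f({j})`, the definition of `f^κ` gives `f = κ f^κ + (1 - κ) F`, while
`f^{ea} = κ √w + (1 - κ) F`. Submodularity makes `f` subadditive, so `f ≤ F` and hence `f^κ ≤ F`.
The lower bound is then `√w ≤ f^κ`, and the upper bound is a linear combination of
`f^κ ≤ α √w` and `f^κ ≤ F`.
-/

theorem le_sum_singleton_of_submodular {V : Type*} [DecidableEq V] {f : Finset V → ℝ}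
    (hsub : ∀ S T : Finset V, f (S ∪ T) + f (S ∩ T) ≤ f S + f T) (hempty : f ∅ = 0)
    (X : Finset V) : f X ≤ ∑ j ∈ X, f {j} := by
  induction X using Finset.induction_on with
  | empty => simp [hempty]
  | @insert a X ha ih =>
    have hdisj : {a} ∩ X = ∅ :=
      Finset.disjoint_iff_inter_eq_empty.mp (Finset.disjoint_singleton_left.mpr ha)
    have h := hsub {a} X
    rw [← Finset.insert_eq, hdisj, hempty] at h
    rw [Finset.sum_insert ha]
    linarith

theorem mix_le_div_mul_mix {κ α s g F : ℝ} (hκ₀ : 0 ≤ κ) (hκ₁ : κ ≤ 1) (hα : 1 ≤ α)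
    (hgs : g ≤ α * s) (hgF : g ≤ F) :
    κ * g + (1 - κ) * F ≤ α / (1 + (α - 1) * (1 - κ)) * (κ * s + (1 - κ) * F) := by
  have hD : 0 < 1 + (α - 1) * (1 - κ) := by
    have := mul_nonneg (sub_nonneg.2 hα) (sub_nonneg.2 hκ₁)
    linarith
  rw [div_mul_eq_mul_div, le_div_iff₀ hD]
  have key : (κ * g + (1 - κ) * F) * (1 + (α - 1) * (1 - κ)) - α * (κ * s + (1 - κ) * F)
      = κ * (g - α * s) + κ * (α - 1) * (1 - κ) * (g - F) := by ring
  have h₁ : κ * (g - α * s) ≤ 0 := mul_nonpos_of_nonneg_of_nonpos hκ₀ (by linarith)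
  have h₂ : κ * (α - 1) * (1 - κ) * (g - F) ≤ 0 :=
    mul_nonpos_of_nonneg_of_nonpos (by positivity) (by linarith)
  linarith

theorem curvature_ellipsoidal_approximation_general
    {V : Type*} [DecidableEq V]
    (f : Finset V → ℝ)
    (hfsub : ∀ S T : Finset V, f (S ∪ T) + f (S ∩ T) ≤ f S + f T)
    (hfnorm : f ∅ = 0)
    (κ : ℝ)
    (hκ₀ : 0 < κ) (hκ₁ : κ ≤ 1)
    (fκ : Finset V → ℝ)
    (hfκ : ∀ X : Finset V, fκ X = (f X - (1 - κ) * ∑ j ∈ X, f {j}) / κ)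
    (w : V → ℝ)
    (α : ℝ) (hα : 1 ≤ α)
    (hea : ∀ X : Finset V,
      Real.sqrt (∑ j ∈ X, w j) ≤ fκ X ∧ fκ X ≤ α * Real.sqrt (∑ j ∈ X, w j))
    (fea : Finset V → ℝ)
    (hfea : ∀ X : Finset V,
      fea X = κ * Real.sqrt (∑ j ∈ X, w j) + (1 - κ) * ∑ j ∈ X, f {j}) :
    ∀ X : Finset V,
      fea X ≤ f X ∧ f X ≤ (α / (1 + (α - 1) * (1 - κ))) * fea X := by
  intro X
  have hfX : f X = κ * fκ X + (1 - κ) * ∑ j ∈ X, f {j} := by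
    rw [hfκ X]
    field_simp
    ring
  have hfκ_le : fκ X ≤ ∑ j ∈ X, f {j} := by
    have hsubadd := le_sum_singleton_of_submodular hfsub hfnorm X
    rw [hfX] at hsubadd
    exact le_of_mul_le_mul_left (by linarith) hκ₀
  obtain ⟨hlow, hup⟩ := hea X
  rw [hfea, hfX]
  exact ⟨by gcongr, mix_le_div_mul_mix hκ₀.le hκ₁ hα hup hfκ_le⟩

/-- curvature-dependent ellipsoidal approximation bound (the lemma
underlying Theorem 4). If `w` is an `α`-ellipsoidal approximation of the
curve-normalized function `f^κ`, then
`f^{ea}(X) = κ·√(w(X)) + (1−κ)·Σ_{j∈X} f({j})` satisfies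
`f^{ea}(X) ≤ f(X) ≤ (α / (1 + (α−1)(1−κ)))·f^{ea}(X)` for all `X`. -/
theorem curvature_ellipsoidal_approximation
    {V : Type*} [Fintype V] [DecidableEq V] [Nonempty V]
    (f : Finset V → ℝ)
    (hfsub : ∀ S T : Finset V, f (S ∪ T) + f (S ∩ T) ≤ f S + f T)
    (hfmono : ∀ S T : Finset V, S ⊆ T → f S ≤ f T)
    (hfnorm : f ∅ = 0)
    (hfpos : ∀ j : V, 0 < f {j})
    (κ : ℝ)
    (hκ : κ = 1 - Finset.univ.inf' Finset.univ_nonempty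
      (fun j : V => (f Finset.univ - f (Finset.univ \ {j})) / f {j}))
    (hκ₀ : 0 < κ) (hκ₁ : κ ≤ 1)
    (fκ : Finset V → ℝ)
    (hfκ : ∀ X : Finset V, fκ X = (f X - (1 - κ) * ∑ j ∈ X, f {j}) / κ)
    (w : V → ℝ) (hw_nonneg : ∀ j : V, 0 ≤ w j)
    (α : ℝ) (hα : 1 ≤ α)
    (hea : ∀ X : Finset V,
      Real.sqrt (∑ j ∈ X, w j) ≤ fκ X ∧ fκ X ≤ α * Real.sqrt (∑ j ∈ X, w j))
    (fea : Finset V → ℝ)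
    (hfea : ∀ X : Finset V,
      fea X = κ * Real.sqrt (∑ j ∈ X, w j) + (1 - κ) * ∑ j ∈ X, f {j}) :
    ∀ X : Finset V,
      fea X ≤ f X ∧ f X ≤ (α / (1 + (α - 1) * (1 - κ))) * fea X :=
  curvature_ellipsoidal_approximation_general f hfsub hfnorm κ hκ₀ hκ₁ fκ hfκ w α hα hea fea hfea
end

section
/- (Properties of the perturbed function in the hardness construction.) Let V be a finite ground set with |V| = n, let κ ∈ [0,1], let α and β be integers with 0 ≤ β ≤ α ≤ n − 1, and let R ⊆ V be a set with |R| = α. Define f_R : 2^V → ℝ by f_R(X) = κ·min( β + |X ∖ R|, |X|, α ) + (1 − κ)·|X|. Then f_R is a polymatroid function: it is normalized, monotone non-decreasing, and submodular. -/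
/-- the perturbed function
`f_R(X) = κ·min(β + |X∖R|, |X|, α) + (1−κ)·|X|` used in the hardness
construction is a polymatroid function: normalized, monotone and submodular. -/
theorem hardness_perturbed_function
    {V : Type*} [Fintype V] [DecidableEq V]
    (n : ℕ) (hn : Fintype.card V = n)
    (κ : ℝ) (hκ₀ : 0 ≤ κ) (hκ₁ : κ ≤ 1)
    (α β : ℕ) (hβα : β ≤ α) (hα : α ≤ n - 1)
    (R : Finset V) (hR : R.card = α)
    (fR : Finset V → ℝ)
    (hfR : ∀ X : Finset V,
      fR X = κ * min ((β : ℝ) + ((X \ R).card : ℝ)) (min (X.card : ℝ) (α : ℝ))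
           + (1 - κ) * (X.card : ℝ)) :
    fR ∅ = 0 ∧
    (∀ S T : Finset V, S ⊆ T → fR S ≤ fR T) ∧
    (∀ S T : Finset V, fR (S ∪ T) + fR (S ∩ T) ≤ fR S + fR T) := by
  have key : ∀ X : Finset V,
      fR X = κ * ((min ((X \ R).card + min β (X ∩ R).card) α : ℕ) : ℝ)
           + (1 - κ) * (X.card : ℝ) := by
    intro X
    rw [hfR]
    congr 2
    have hc : (X \ R).card + (X ∩ R).card = X.card :=
      Finset.card_sdiff_add_card_inter X R
    have h1 : min ((X \ R).card + min β (X ∩ R).card) α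
        = min (β + (X \ R).card) (min X.card α) := by omega
    rw [h1]
    push_cast
    ring_nf
  refine ⟨?_, ?_, ?_⟩
  · simp [key]
  · intro S T hST
    rw [key, key]
    have ha : (S \ R).card ≤ (T \ R).card :=
      Finset.card_le_card (Finset.sdiff_subset_sdiff hST le_rfl)
    have hb : (S ∩ R).card ≤ (T ∩ R).card :=
      Finset.card_le_card (Finset.inter_subset_inter hST le_rfl)
    have hm : min ((S \ R).card + min β (S ∩ R).card) α
        ≤ min ((T \ R).card + min β (T ∩ R).card) α := by omega
    have hc : S.card ≤ T.card := Finset.card_le_card hST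
    have hm' : ((min ((S \ R).card + min β (S ∩ R).card) α : ℕ) : ℝ)
        ≤ ((min ((T \ R).card + min β (T ∩ R).card) α : ℕ) : ℝ) := by
      exact_mod_cast hm
    have hc' : ((S.card : ℕ) : ℝ) ≤ (T.card : ℝ) := by exact_mod_cast hc
    nlinarith [mul_le_mul_of_nonneg_left hm' hκ₀,
      mul_le_mul_of_nonneg_left hc' (by linarith : (0:ℝ) ≤ 1 - κ)]
  · intro S T
    rw [key, key, key, key]
    have ea : ((S ∪ T) \ R).card + ((S ∩ T) \ R).card
        = (S \ R).card + (T \ R).card := by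
      rw [Finset.union_sdiff_distrib, show (S ∩ T) \ R = (S \ R) ∩ (T \ R) by
        ext x; simp [Finset.mem_sdiff, Finset.mem_inter]; tauto]
      exact Finset.card_union_add_card_inter _ _
    have eb : ((S ∪ T) ∩ R).card + ((S ∩ T) ∩ R).card
        = (S ∩ R).card + (T ∩ R).card := by
      rw [Finset.union_inter_distrib_right, show (S ∩ T) ∩ R = (S ∩ R) ∩ (T ∩ R) by
        ext x; simp [Finset.mem_inter, and_assoc, and_left_comm]]
      exact Finset.card_union_add_card_inter _ _
    have ec : (S ∪ T).card + (S ∩ T).card = S.card + T.card :=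
      Finset.card_union_add_card_inter _ _
    have maS : ((S ∩ T) \ R).card ≤ (S \ R).card :=
      Finset.card_le_card (Finset.sdiff_subset_sdiff Finset.inter_subset_left le_rfl)
    have maT : ((S ∩ T) \ R).card ≤ (T \ R).card :=
      Finset.card_le_card (Finset.sdiff_subset_sdiff Finset.inter_subset_right le_rfl)
    have mbS : ((S ∩ T) ∩ R).card ≤ (S ∩ R).card :=
      Finset.card_le_card (Finset.inter_subset_inter Finset.inter_subset_left le_rfl)
    have mbT : ((S ∩ T) ∩ R).card ≤ (T ∩ R).card :=
      Finset.card_le_card (Finset.inter_subset_inter Finset.inter_subset_right le_rfl)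
    have hm : min (((S ∪ T) \ R).card + min β ((S ∪ T) ∩ R).card) α
        + min (((S ∩ T) \ R).card + min β ((S ∩ T) ∩ R).card) α
        ≤ min ((S \ R).card + min β (S ∩ R).card) α
        + min ((T \ R).card + min β (T ∩ R).card) α := by omega
    have hm' : ((min (((S ∪ T) \ R).card + min β ((S ∪ T) ∩ R).card) α : ℕ) : ℝ)
        + ((min (((S ∩ T) \ R).card + min β ((S ∩ T) ∩ R).card) α : ℕ) : ℝ)
        ≤ ((min ((S \ R).card + min β (S ∩ R).card) α : ℕ) : ℝ)
        + ((min ((T \ R).card + min β (T ∩ R).card) α : ℕ) : ℝ) := by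
      exact_mod_cast hm
    have ec' : ((S ∪ T).card : ℝ) + ((S ∩ T).card : ℝ)
        = (S.card : ℝ) + (T.card : ℝ) := by exact_mod_cast ec
    nlinarith [mul_le_mul_of_nonneg_left hm' hκ₀]
end
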